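/- arXiv:1710.05001 — 3 statements merged into one kernel-verified Lean document; each statement's English description precedes it below -/
import Mathlib

section
/- Let χ be a Dirichlet character of odd modulus k, p ≥ 1 odd, q a positive integer, and d, c coprime positive integers with c > 0 and c even. Then s_{2,p}(qd, qc : χ) = s_{2,p}(d, c : χ), where s_{2,p}(d,c:χ) = Σ_{n=1}^{ck} (−1)^n χ(n) 𝔅_{p,χ}(dn/c) 𝔅_1(n/(ck)). -/
open Finset

/-- Bernoulli polynomial evaluated on ℝ. -/
noncomputable def bernPoly (n : ℕ) (x : ℝ) : ℝ :=
  ((Polynomial.bernoulli n).map (algebraMap ℚ ℝ)).eval x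

/-- Periodic Bernoulli function 𝔅ₙ (with 𝔅₁ vanishing at integers). -/
noncomputable def pB (n : ℕ) (x : ℝ) : ℝ :=
  if n = 1 ∧ Int.fract x = 0 then 0 else bernPoly n (Int.fract x)

/-- Euler polynomial Eₙ (via the standard Bernoulli identity). -/
noncomputable def eulerPoly (n : ℕ) (x : ℝ) : ℝ :=
  2 ^ (n + 1) / (n + 1) * (bernPoly (n + 1) ((x + 1) / 2) - bernPoly (n + 1) (x / 2))

/-- Periodic Euler function ℰₙ, with ℰₙ(x+m) = (-1)^m ℰₙ(x). -/
noncomputable def pE (n : ℕ) (x : ℝ) : ℝ :=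
  (-1 : ℝ) ^ ⌊x⌋ * eulerPoly n (Int.fract x)

/-- Conjugate Dirichlet character χ̄. -/
noncomputable def conjChar {k : ℕ} (χ : DirichletCharacter ℂ k) : DirichletCharacter ℂ k :=
  χ.ringHomComp (starRingEnd ℂ)

/-- Generalized Bernoulli function 𝔅_{m,χ}(x) = k^{m-1} Σ_{j=0}^{k-1} χ̄(j) 𝔅_m((j+x)/k). -/
noncomputable def genB {k : ℕ} (χ : DirichletCharacter ℂ k) (m : ℕ) (x : ℝ) : ℂ :=
  (k : ℂ) ^ ((m : ℤ) - 1) *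
    ∑ j ∈ Finset.range k, conjChar χ j * ((pB m ((j + x) / k) : ℝ) : ℂ)

/-- Character Euler function ℰ_{m,χ}(x) = k^m Σ_{j=0}^{k-1} (-1)^j χ̄(j) ℰ_m((j+x)/k). -/
noncomputable def genE {k : ℕ} (χ : DirichletCharacter ℂ k) (m : ℕ) (x : ℝ) : ℂ :=
  (k : ℂ) ^ m *
    ∑ j ∈ Finset.range k, (-1 : ℂ) ^ j * conjChar χ j * ((pE m ((j + x) / k) : ℝ) : ℂ)

/-- Character Hardy–Berndt sum s_{1,p}(d,c:χ). -/
noncomputable def s1p {k : ℕ} (χ : DirichletCharacter ℂ k) (p d c : ℕ) : ℂ :=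
  ∑ n ∈ Finset.Icc 1 (c * k),
    χ n * genE χ (p - 1) ((d : ℝ) * n / c) * ((pB 1 ((n : ℝ) / ((c : ℝ) * k)) : ℝ) : ℂ)

/-- Character Hardy–Berndt sum s_{2,p}(d,c:χ). -/
noncomputable def s2p {k : ℕ} (χ : DirichletCharacter ℂ k) (p d c : ℕ) : ℂ :=
  ∑ n ∈ Finset.Icc 1 (c * k),
    (-1 : ℂ) ^ n * χ n * genB χ p ((d : ℝ) * n / c) * ((pB 1 ((n : ℝ) / ((c : ℝ) * k)) : ℝ) : ℂ)

/-- Character Hardy–Berndt sum s_{5,p}(d,c:χ). -/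
noncomputable def s5p {k : ℕ} (χ : DirichletCharacter ℂ k) (p d c : ℕ) : ℂ :=
  ∑ n ∈ Finset.Icc 1 (c * k),
    (-1 : ℂ) ^ n * χ n * genE χ (p - 1) ((d : ℝ) * n / c) * ((pB 1 ((n : ℝ) / ((c : ℝ) * k)) : ℝ) : ℂ)

/- ### Auxiliary lemmas -/

lemma aux_bernPoly_one (x : ℝ) : bernPoly 1 x = x - 1/2 := by
  unfold bernPoly
  simp [Polynomial.bernoulli, Finset.sum_range_succ]
  ring

lemma aux_pB_one_of (x : ℝ) (h0 : 0 < x) (h1 : x < 1) : pB 1 x = x - 1/2 := by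
  have hf : Int.fract x = x := Int.fract_eq_self.2 ⟨le_of_lt h0, h1⟩
  rw [pB, if_neg, hf, aux_bernPoly_one]
  simp [hf]; linarith

lemma aux_pB_one_one : pB 1 1 = 0 := by
  rw [pB, if_pos]; simp [Int.fract_one]

lemma aux_sum_range_cast (n : ℕ) : ∑ m ∈ range n, (m:ℝ) = n*(n-1)/2 := by
  induction n with
  | zero => simp
  | succ n ih => rw [Finset.sum_range_succ, ih]; push_cast; ring

lemma aux_pB_one_dist (q : ℕ) (hq : 0 < q) (x : ℝ) (hx0 : 0 < x) (hx1 : x ≤ 1) :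
    ∑ m ∈ range q, pB 1 ((x + m)/q) = pB 1 x := by
  have hq0 : (q:ℝ) ≠ 0 := Nat.cast_ne_zero.2 hq.ne'
  have hqR : (0:ℝ) < q := Nat.cast_pos.2 hq
  rcases lt_or_eq_of_le hx1 with h1 | h1
  · have hterm : ∀ m ∈ range q, pB 1 ((x + m)/q) = (x+m)/q - 1/2 := by
      intro m hm
      have hmq : (m:ℝ) + 1 ≤ q := by exact_mod_cast Nat.succ_le_of_lt (Finset.mem_range.1 hm)
      apply aux_pB_one_of
      · positivity
      · rw [div_lt_one hqR]; linarith
    rw [Finset.sum_congr rfl hterm, aux_pB_one_of x hx0 h1]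
    rw [Finset.sum_sub_distrib, ← Finset.sum_div, Finset.sum_add_distrib,
      Finset.sum_const, aux_sum_range_cast]
    simp only [Finset.card_range, nsmul_eq_mul, Finset.sum_const]
    field_simp
    ring
  · subst h1
    obtain ⟨t, rfl⟩ := Nat.exists_eq_succ_of_ne_zero hq.ne'
    rw [Finset.sum_range_succ, aux_pB_one_one]
    have hlast : (1 + (t:ℝ))/(t+1 : ℕ) = 1 := by push_cast; field_simp; ring
    rw [hlast, aux_pB_one_one, add_zero]
    have hterm : ∀ m ∈ range t, pB 1 ((1 + (m:ℝ))/(t+1:ℕ)) = (1+m)/(t+1:ℕ) - 1/2 := by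
      intro m hm
      have hmt : (m:ℝ) + 1 ≤ t := by exact_mod_cast Nat.succ_le_of_lt (Finset.mem_range.1 hm)
      have htR : (0:ℝ) < (t+1:ℕ) := by positivity
      apply aux_pB_one_of
      · positivity
      · rw [div_lt_one htR]; push_cast; linarith
    rw [Finset.sum_congr rfl hterm, Finset.sum_sub_distrib, ← Finset.sum_div,
      Finset.sum_add_distrib, Finset.sum_const, aux_sum_range_cast]
    simp only [Finset.card_range, nsmul_eq_mul, Finset.sum_const]
    have : ((t:ℝ)+1) ≠ 0 := by positivity
    push_cast
    field_simp
    ring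

lemma aux_pB_period (m : ℕ) (x : ℝ) (z : ℤ) : pB m (x + z) = pB m x := by
  unfold pB; rw [Int.fract_add_intCast]

lemma aux_genB_period {k : ℕ} (hk : 0 < k) (χ : DirichletCharacter ℂ k) (m : ℕ) (x : ℝ) (a : ℕ) :
    genB χ m (x + a * k) = genB χ m x := by
  unfold genB
  congr 1
  apply Finset.sum_congr rfl
  intro j _
  have hk0 : (k:ℝ) ≠ 0 := Nat.cast_ne_zero.2 hk.ne'
  have : ((j:ℝ) + (x + a * k)) / k = ((j:ℝ) + x)/k + (a:ℤ) := by
    push_cast; field_simp; ring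
  rw [this, aux_pB_period]

theorem stmt12 (k : ℕ) (hk : Odd k) (χ : DirichletCharacter ℂ k)
    (p : ℕ) (hp : Odd p) (hp1 : 1 ≤ p) (q : ℕ) (hq : 0 < q)
    (d c : ℕ) (hd : 0 < d) (hc : 0 < c) (hcop : Nat.Coprime d c) (hceven : Even c) :
    s2p χ p (q * d) (q * c) = s2p χ p d c := by
  have hk0 : 0 < k := hk.pos
  have hkR : (k:ℝ) ≠ 0 := Nat.cast_ne_zero.2 hk0.ne'
  have hcR : (c:ℝ) ≠ 0 := Nat.cast_ne_zero.2 hc.ne'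
  have hqR : (q:ℝ) ≠ 0 := Nat.cast_ne_zero.2 hq.ne'
  set N := c * k with hN
  clear_value N
  have hN0 : 0 < N := hN ▸ Nat.mul_pos hc hk0
  have hNR : (0:ℝ) < (N:ℝ) := Nat.cast_pos.2 hN0
  set g : ℕ → ℂ := fun n => (-1:ℂ)^n * χ n * genB χ p ((d:ℝ)*n/c) with hg
  -- periodicity of g
  have hgper : ∀ n, g (n + N) = g n := by
    intro n
    have hEvenN : Even N := hN ▸ (hceven.mul_right k)
    have h1 : (-1:ℂ)^(n + N) = (-1:ℂ)^n := by
      rw [pow_add, hEvenN.neg_one_pow, mul_one]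
    have h2 : ((n + N : ℕ) : ZMod k) = (n : ZMod k) := by
      push_cast [hN]; simp [ZMod.natCast_self]
    have h3 : (d:ℝ)*((n + N : ℕ):ℝ)/c = (d:ℝ)*n/c + (d:ℝ)*k := by
      rw [hN]; push_cast; field_simp
    simp only [hg]
    rw [h1, h2, h3, aux_genB_period hk0]
  have hgper' : ∀ m r, g (m * N + r) = g r := by
    intro m
    induction m with
    | zero => intro r; simp
    | succ m ih =>
      intro r
      have : (m+1) * N + r = (m * N + r) + N := by ring
      rw [this, hgper, ih]
  -- reduce both sides
  unfold s2p
  have harg2 : ∀ n : ℕ, ((q*c : ℕ):ℝ) * k = ((q*N : ℕ):ℝ) := by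
    intro n; rw [hN]; push_cast; ring
  calc
    ∑ n ∈ Finset.Icc 1 (q*c * k),
        (-1:ℂ)^n * χ n * genB χ p ((↑(q*d):ℝ) * n / ↑(q*c)) *
          ((pB 1 ((n:ℝ) / ((↑(q*c):ℝ) * k)) : ℝ) : ℂ)
      = ∑ n ∈ Finset.Icc 1 (q*N), g n * ((pB 1 ((n:ℝ) / ((q*N : ℕ):ℝ)) : ℝ) : ℂ) := by
        rw [show q*c*k = q*N by rw [hN, Nat.mul_assoc]]
        apply Finset.sum_congr rfl
        intro n _
        have harg : ((q*d : ℕ):ℝ) * n / ((q*c : ℕ):ℝ) = (d:ℝ)*n/c := by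
          push_cast; field_simp
        rw [harg, harg2 n]
    _ = ∑ mr ∈ Finset.range q ×ˢ Finset.Icc 1 N,
          g (mr.1 * N + mr.2) * ((pB 1 (((mr.1 * N + mr.2 : ℕ):ℝ) / ((q*N : ℕ):ℝ)) : ℝ) : ℂ) := by
        apply Finset.sum_nbij' (i := fun n => ((n-1)/N, (n-1) % N + 1))
          (j := fun mr => mr.1 * N + mr.2)
        · intro n hn
          obtain ⟨hn1, hn2⟩ := Finset.mem_Icc.1 hn
          refine Finset.mem_product.2 ⟨Finset.mem_range.2 ?_, Finset.mem_Icc.2 ⟨le_add_self.trans (le_refl _), ?_⟩⟩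
          · have h' : n - 1 < N * q := by rw [Nat.mul_comm]; omega
            exact Nat.div_lt_of_lt_mul h'
          · have := Nat.mod_lt (n-1) hN0; omega
        · intro mr hmr
          obtain ⟨h1, h2⟩ := Finset.mem_product.1 hmr
          have hm := Finset.mem_range.1 h1
          obtain ⟨hr1, hr2⟩ := Finset.mem_Icc.1 h2
          refine Finset.mem_Icc.2 ⟨le_trans hr1 (Nat.le_add_left _ _), ?_⟩
          have h1 : (mr.1 + 1) * N ≤ q * N := Nat.mul_le_mul_right N hm
          have h2 : (mr.1 + 1) * N = mr.1 * N + N := by ring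
          omega
        · intro n hn
          obtain ⟨hn1, _⟩ := Finset.mem_Icc.1 hn
          have := Nat.div_add_mod' (n-1) N
          simp only
          omega
        · intro mr hmr
          obtain ⟨h1, h2⟩ := Finset.mem_product.1 hmr
          obtain ⟨hr1, hr2⟩ := Finset.mem_Icc.1 h2
          have heq : mr.1 * N + mr.2 - 1 = N * mr.1 + (mr.2 - 1) := by rw [Nat.mul_comm mr.1 N]; omega
          have hlt : mr.2 - 1 < N := by omega
          simp only [heq, Nat.mul_add_div hN0, Nat.mul_add_mod,
            Nat.div_eq_of_lt hlt, Nat.mod_eq_of_lt hlt, add_zero]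
          have : mr.2 - 1 + 1 = mr.2 := by omega
          rw [this]
        · intro n hn
          obtain ⟨hn1, _⟩ := Finset.mem_Icc.1 hn
          have hdm := Nat.div_add_mod' (n-1) N
          have : (n-1)/N * N + ((n-1) % N + 1) = n := by omega
          simp only [this]
    _ = ∑ m ∈ Finset.range q, ∑ r ∈ Finset.Icc 1 N,
          g r * ((pB 1 (((r:ℝ)/(N:ℝ) + (m:ℝ))/(q:ℝ)) : ℝ) : ℂ) := by
        rw [Finset.sum_product]
        apply Finset.sum_congr rfl
        intro m _
        apply Finset.sum_congr rfl
        intro r _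
        rw [hgper' m r]
        congr 2
        push_cast
        field_simp
        ring
    _ = ∑ r ∈ Finset.Icc 1 N, g r * ((pB 1 ((r:ℝ)/(N:ℝ)) : ℝ) : ℂ) := by
        rw [Finset.sum_comm]
        apply Finset.sum_congr rfl
        intro r hr
        obtain ⟨hr1, hr2⟩ := Finset.mem_Icc.1 hr
        rw [← Finset.mul_sum]
        congr 1
        rw [← Complex.ofReal_sum]
        congr 1
        apply aux_pB_one_dist q hq
        · positivity
        · rw [div_le_one hNR]; exact_mod_cast hr2
    _ = ∑ n ∈ Finset.Icc 1 (c * k),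
          (-1:ℂ)^n * χ n * genB χ p ((d:ℝ) * n / c) * ((pB 1 ((n:ℝ) / ((c:ℝ) * k)) : ℝ) : ℂ) := by
        subst hN
        apply Finset.sum_congr rfl
        intro n _
        simp only [hg]
        rw [Nat.cast_mul]
end

section
/- Let χ be a Dirichlet character of odd modulus k, p ≥ 1 odd, q a positive integer, and d, c coprime positive integers with c > 0 and d + c even. Then s_{5,p}(qd, qc : χ) = s_{5,p}(d, c : χ), where s_{5,p}(d,c:χ) = Σ_{n=1}^{ck} (−1)^n χ(n) ℰ_{p−1,χ}(dn/c) 𝔅_1(n/(ck)). -/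
open Finset

/-!
Write `n = m + r·ck` with `1 ≤ m ≤ ck` and `0 ≤ r < q`. The character is `k`-periodic, and
shifting the argument of `ℰ_{p-1,χ}` by `rdk` costs the sign `(-1)^{rd}`, which cancels
`(-1)^{rck}` since `ck + d ≡ c + d` is even for odd `k`. What remains of the sum over `r` is
`∑_{r<q} 𝔅₁((x + r)/q) = 𝔅₁(x)` (Raabe's multiplication formula), proved by reducing to
`0 ≤ x < 1` via `1`-periodicity of both sides.
-/

lemma bernPoly_one (x : ℝ) : bernPoly 1 x = x - 1 / 2 := by
  simp [bernPoly, Polynomial.bernoulli_def, Finset.sum_range_succ]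
  ring

lemma pB_one_of_mem_Ico {y : ℝ} (hy : y ∈ Set.Ico 0 1) :
    pB 1 y = y - 1 / 2 + if y = 0 then 1 / 2 else 0 := by
  rw [pB, Int.fract_eq_self.mpr hy, bernPoly_one]
  split_ifs <;> simp_all

lemma pB_one_periodic : Function.Periodic (pB 1) 1 := by
  intro x
  simp only [pB, Int.fract_add_one]

lemma sum_range_pB_one_div_of_mem_Ico {q : ℕ} (hq : 0 < q) {t : ℝ} (ht : t ∈ Set.Ico 0 1) :
    ∑ r ∈ range q, pB 1 ((t + r) / q) = pB 1 t := by
  have hq' : (q : ℝ) ≠ 0 := by positivity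
  have hmem : ∀ r ∈ range q, (t + r) / q ∈ Set.Ico (0 : ℝ) 1 := fun r hr ↦
    ⟨by have := ht.1; positivity, (div_lt_one (by positivity)).mpr <| by
      have : (r : ℝ) + 1 ≤ q := by exact_mod_cast mem_range.mp hr
      linarith [ht.2]⟩
  have hgauss : (∑ r ∈ range q, (r : ℝ)) * 2 = q * (q - 1) := by
    rw [← Nat.cast_sum, ← Nat.cast_ofNat, ← Nat.cast_mul, sum_range_id_mul_two, Nat.cast_mul,
      Nat.cast_pred hq]
  have hlinear : ∑ r ∈ range q, ((t + r) / q - 1 / 2) = t - 1 / 2 := by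
    rw [sum_sub_distrib, ← sum_div, sum_add_distrib]
    simp only [sum_const, card_range, nsmul_eq_mul]
    field_simp
    linear_combination hgauss
  have hjump : ∑ r ∈ range q, (if (t + r) / q = 0 then (1 / 2 : ℝ) else 0) =
      if t = 0 then 1 / 2 else 0 := by
    rw [sum_eq_single_of_mem 0 (mem_range.mpr hq)]
    · simp [hq']
    · intro r _ hr
      have : (0 : ℝ) < (t + r) / q := by have := ht.1; positivity
      simp [this.ne']
  rw [sum_congr rfl fun r hr ↦ pB_one_of_mem_Ico (hmem r hr), sum_add_distrib, hlinear, hjump,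
    pB_one_of_mem_Ico ht]

lemma sum_range_pB_one_div {q : ℕ} (hq : 0 < q) (x : ℝ) :
    ∑ r ∈ range q, pB 1 ((x + r) / q) = pB 1 x := by
  have hperiodic : Function.Periodic (fun y ↦ ∑ r ∈ range q, pB 1 ((y + r) / q)) 1 := by
    intro y
    have hwrap : pB 1 ((y + q) / q) = pB 1 ((y + (0 : ℕ)) / q) := by
      rw [add_div, div_self (by positivity), pB_one_periodic, Nat.cast_zero, add_zero]
    have hshift : ∀ r : ℕ, y + 1 + r = y + (r + 1 : ℕ) := fun r ↦ by push_cast; ring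
    simp only [hshift]
    rw [← add_left_inj (pB 1 ((y + (0 : ℕ)) / q)),
      ← sum_range_succ' (fun r : ℕ ↦ pB 1 ((y + r) / q)), sum_range_succ, hwrap]
  have hreduce := hperiodic.sub_int_mul_eq ⌊x⌋ (x := x)
  simp only [mul_one, Int.self_sub_floor] at hreduce
  rw [← hreduce, ← pB_one_periodic.sub_int_mul_eq (x := x) ⌊x⌋, mul_one, Int.self_sub_floor]
  exact sum_range_pB_one_div_of_mem_Ico hq ⟨Int.fract_nonneg x, Int.fract_lt_one x⟩

lemma pE_add_natCast (n j : ℕ) (x : ℝ) : pE n (x + j) = (-1) ^ j * pE n x := by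
  rw [pE, pE, Int.fract_add_natCast, Int.floor_add_natCast, zpow_add₀ (by norm_num), zpow_natCast]
  ring

lemma genE_add_natCast_mul {k : ℕ} (hk : k ≠ 0) (χ : DirichletCharacter ℂ k) (n j : ℕ) (x : ℝ) :
    genE χ n (x + j * k) = (-1) ^ j * genE χ n x := by
  have hk' : (k : ℝ) ≠ 0 := Nat.cast_ne_zero.mpr hk
  simp only [genE, mul_sum]
  refine sum_congr rfl fun i _ ↦ ?_
  rw [show ((i : ℝ) + (x + j * k)) / k = (i + x) / k + j by field_simp; ring, pE_add_natCast]
  push_cast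
  ring

lemma sum_Icc_mul_eq_sum_range_sum_Icc {M : Type*} [AddCommMonoid M] (f : ℕ → M) (N q : ℕ) :
    ∑ n ∈ Icc 1 (q * N), f n = ∑ r ∈ range q, ∑ m ∈ Icc 1 N, f (m + r * N) := by
  induction q with
  | zero => simp
  | succ q ih =>
    have hIcc : ∀ b, Icc 1 b = Ioc 0 b := Icc_add_one_left_eq_Ioc 0
    simp only [hIcc] at ih ⊢
    have hblock : Ioc (q * N) (q * N + N) = (Ioc 0 N).map (addRightEmbedding (q * N)) := by
      rw [map_add_right_Ioc, zero_add, add_comm N]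
    rw [sum_range_succ, ← ih, add_one_mul, ← sum_Ioc_consecutive f (Nat.zero_le _) le_self_add,
      hblock, sum_map]
    rfl

lemma s5p_summand_add_mul {k : ℕ} (hk : Odd k) (χ : DirichletCharacter ℂ k) (n : ℕ)
    {q d c : ℕ} (hq : q ≠ 0) (hc : c ≠ 0) (hdc : Even (d + c)) (m r : ℕ) :
    (-1 : ℂ) ^ (m + r * (c * k)) * χ ↑(m + r * (c * k)) *
        genE χ n ((↑(q * d) : ℝ) * ↑(m + r * (c * k)) / ↑(q * c)) *
        ((pB 1 ((↑(m + r * (c * k)) : ℝ) / ((↑(q * c) : ℝ) * k)) : ℝ) : ℂ) =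
      (-1 : ℂ) ^ m * χ m * genE χ n ((d : ℝ) * m / c) *
        ((pB 1 (((m : ℝ) / ((c : ℝ) * k) + r) / q) : ℝ) : ℂ) := by
  have hk0 : k ≠ 0 := by rintro rfl; simp at hk
  have hχ : χ ↑(m + r * (c * k)) = χ m := by simp
  have hgenE_arg : (↑(q * d) : ℝ) * ↑(m + r * (c * k)) / ↑(q * c) = d * m / c + ↑(r * d) * k := by
    push_cast
    field_simp
  have hpB_arg : (↑(m + r * (c * k)) : ℝ) / ((↑(q * c) : ℝ) * k) = (m / (c * k) + r) / q := by
    push_cast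
    field_simp
  have hsign : (-1 : ℂ) ^ (r * (c * k)) * (-1) ^ (r * d) = 1 := by
    have hparity : Even (c * k + d) := by
      simpa [Nat.even_add, Nat.even_mul, Nat.not_even_iff_odd.mpr hk, iff_comm] using hdc
    rw [← pow_add, ← mul_add]
    exact (hparity.mul_left r).neg_one_pow
  rw [hχ, hgenE_arg, genE_add_natCast_mul hk0, hpB_arg, pow_add]
  linear_combination ((-1 : ℂ) ^ m * χ m * genE χ n (d * m / c) *
    ((pB 1 ((m / (c * k) + r) / q) : ℝ) : ℂ)) * hsign

theorem stmt13_general (k : ℕ) (hk : Odd k) (χ : DirichletCharacter ℂ k)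
    (p : ℕ) (q : ℕ) (hq : 0 < q)
    (d c : ℕ) (hc : 0 < c) (hdceven : Even (d + c)) :
    s5p χ p (q * d) (q * c) = s5p χ p d c := by
  unfold s5p
  rw [mul_assoc q c k, sum_Icc_mul_eq_sum_range_sum_Icc, sum_comm]
  refine sum_congr rfl fun m _ ↦ ?_
  rw [sum_congr rfl fun r _ ↦ s5p_summand_add_mul hk χ (p - 1) hq.ne' hc.ne' hdceven m r,
    ← mul_sum, ← Complex.ofReal_sum, sum_range_pB_one_div hq]

theorem stmt13 (k : ℕ) (hk : Odd k) (χ : DirichletCharacter ℂ k)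
    (p : ℕ) (hp : Odd p) (hp1 : 1 ≤ p) (q : ℕ) (hq : 0 < q)
    (d c : ℕ) (hd : 0 < d) (hc : 0 < c) (hcop : Nat.Coprime d c) (hdceven : Even (d + c)) :
    s5p χ p (q * d) (q * c) = s5p χ p d c :=
  stmt13_general k hk χ p q hq d c hc hdceven
end

section
/- Let χ be a non-principal primitive Dirichlet character of odd modulus k, and let p ≥ 1 be odd and 1 ≤ m ≤ p. Then Σ_{n=1}^{k} χ̄(n) 𝔅_{p+1−m,χ̄}(−kn/2) ℰ_{m−1}(n/k) = k^{1−m} 2^{m−p−2} χ̄(2) (p+1−m) ℰ_{p−m,χ̄}(k) ℰ_{m−1,χ}(0). -/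
open Finset

/-!
Put `n = p - m` and `A(x) = ∑_{j<k} χ(j) 𝔅_{n+1}(j/k + x)`. Since `𝔅_{n+1}` has period 1,
`𝔅_{n+1,χ̄}(-kj/2) = k^n A(-j/2)` depends only on the parity of `j`, so the sum splits as
`k^n ((A(0) + A(1/2))/2 · ∑ χ̄(j) ℰ_{m-1}(j/k) + (A(0) - A(1/2))/2 · ∑ (-1)^j χ̄(j) ℰ_{m-1}(j/k))`.
The reflection `j ↦ k - j` multiplies `A(0) + A(1/2)` by `χ(-1)(-1)^{n+1}` and the first Euler sum
by `χ(-1)(-1)^{m-1}`; as `p` is odd the two signs are opposite, so the first product vanishes.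
For the second, `𝔅_{n+1}(x + 1/2) - 𝔅_{n+1}(x) = (n+1) 2^{-n-1} ℰ_n(2x)`, and since `k` is odd the
substitution `j ↦ 2j mod k` gives `∑ χ(j) ℰ_n(2j/k) = χ̄(2) ∑ (-1)^j χ(j) ℰ_n(j/k)`, which is
`-χ̄(2) k^{-n} ℰ_{n,χ̄}(k)`; the remaining alternating sum is `k^{1-m} ℰ_{m-1,χ}(0)`.
-/

lemma bernPoly_eq_bernoulliFun : bernPoly = bernoulliFun := rfl

lemma pB_add_int (n : ℕ) (x : ℝ) (z : ℤ) : pB n (x + z) = pB n x := by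
  rw [pB, pB, Int.fract_add_intCast]

lemma pB_neg (n : ℕ) (x : ℝ) : pB n (-x) = (-1) ^ n * pB n x := by
  -- At integers this needs `𝔅₁ = 0` there and `B_n(1) = B_n(0)` for `n ≠ 1`.
  by_cases hx : Int.fract x = 0
  · have hnx : Int.fract (-x) = 0 := Int.fract_neg_eq_zero.mpr hx
    by_cases hn : n = 1
    · simp [pB, hx, hnx, hn]
    · have h := bernoulliFun_eval_one_sub (k := n) (x := 0)
      rw [sub_zero, bernoulliFun_endpoints_eq_of_ne_one hn] at h
      simpa only [pB, hx, hnx, hn, false_and, if_false, bernPoly_eq_bernoulliFun] using h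
  · have hnx : Int.fract (-x) = 1 - Int.fract x := Int.fract_neg hx
    rw [pB, pB, if_neg (by rw [hnx]; exact fun h => by linarith [h.2, Int.fract_lt_one x]),
      if_neg (by tauto), hnx, bernPoly_eq_bernoulliFun, bernoulliFun_eval_one_sub]

lemma pE_add_nat (n : ℕ) (x : ℝ) (c : ℕ) : pE n (x + c) = (-1) ^ c * pE n x := by
  rw [pE, pE, Int.floor_add_natCast, Int.fract_add_natCast,
    zpow_add₀ (by norm_num : (-1 : ℝ) ≠ 0), zpow_natCast]
  ring

lemma pE_of_mem_Ico {n : ℕ} {x : ℝ} (hx : x ∈ Set.Ico 0 1) : pE n x = eulerPoly n x := by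
  rw [pE, Int.floor_eq_zero_iff.mpr hx, Int.fract_eq_self.mpr hx, zpow_zero, one_mul]

lemma eulerPoly_one_sub (n : ℕ) (x : ℝ) : eulerPoly n (1 - x) = (-1) ^ n * eulerPoly n x := by
  rw [eulerPoly, eulerPoly, show (1 - x + 1) / 2 = 1 - x / 2 by ring,
    show (1 - x) / 2 = 1 - (x + 1) / 2 by ring, bernPoly_eq_bernoulliFun,
    bernoulliFun_eval_one_sub, bernoulliFun_eval_one_sub, pow_succ]
  ring

lemma pE_one_sub {n : ℕ} {x : ℝ} (hx : x ∈ Set.Ioo 0 1) : pE n (1 - x) = (-1) ^ n * pE n x := by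
  rw [pE_of_mem_Ico ⟨by linarith [hx.2], by linarith [hx.1]⟩,
    pE_of_mem_Ico (Set.Ioo_subset_Ico_self hx), eulerPoly_one_sub]

lemma pB_of_mem_Ioo {n : ℕ} {x : ℝ} (hx : x ∈ Set.Ioo 0 1) : pB n x = bernPoly n x := by
  rw [pB, Int.fract_eq_self.mpr (Set.Ioo_subset_Ico_self hx),
    if_neg fun h => by linarith [h.2, hx.1]]

lemma pB_add_half_sub (n : ℕ) {x : ℝ} (hx : x ∈ Set.Ioo 0 1) (hx2 : x ≠ 1 / 2) :
    pB (n + 1) (x + 1 / 2) - pB (n + 1) x = (n + 1) / 2 ^ (n + 1) * pE n (2 * x) := by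
  obtain ⟨h0, h1⟩ := hx
  rw [pB_of_mem_Ioo ⟨h0, h1⟩]
  rcases lt_or_gt_of_ne hx2 with hlt | hgt
  · rw [pB_of_mem_Ioo ⟨by linarith, by linarith⟩, pE_of_mem_Ico ⟨by linarith, by linarith⟩,
      eulerPoly, show (2 * x + 1) / 2 = x + 1 / 2 by ring, show 2 * x / 2 = x by ring]
    field_simp
  · rw [show x + 1 / 2 = x - 1 / 2 + ((1 : ℤ) : ℝ) by push_cast; ring, pB_add_int,
      pB_of_mem_Ioo ⟨by linarith, by linarith⟩, show 2 * x = 2 * x - 1 + ((1 : ℕ) : ℝ) by simp,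
      pE_add_nat, pE_of_mem_Ico ⟨by linarith, by linarith⟩, eulerPoly,
      show (2 * x - 1 + 1) / 2 = x by ring, show (2 * x - 1) / 2 = x - 1 / 2 by ring]
    field_simp
    ring

section RangeSums

variable {M : Type*}

lemma sum_range_succ_eq_of_apply_eq [AddCancelCommMonoid M] (f : ℕ → M) {k : ℕ}
    (h : f k = f 0) : ∑ j ∈ range k, f (j + 1) = ∑ j ∈ range k, f j := by
  apply add_right_cancel (b := f 0)
  rw [← sum_range_succ', sum_range_succ, h]

lemma sum_range_sub_eq_of_apply_eq [AddCancelCommMonoid M] (f : ℕ → M) {k : ℕ}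
    (h : f k = f 0) : ∑ j ∈ range k, f (k - j) = ∑ j ∈ range k, f j := by
  rw [← sum_range_succ_eq_of_apply_eq f h, ← sum_range_reflect]
  refine sum_congr rfl fun j hj => ?_
  rw [mem_range] at hj
  congr 1
  omega

lemma sum_Icc_one_eq_sum_range_of_apply_eq [AddCancelCommMonoid M] (f : ℕ → M) {k : ℕ}
    (h : f k = f 0) : ∑ j ∈ Icc 1 k, f j = ∑ j ∈ range k, f j := by
  rw [← sum_range_succ_eq_of_apply_eq f h, ← Ico_add_one_right_eq_Icc, sum_Ico_eq_sum_range]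
  simp [add_comm]

lemma Function.Periodic.sum_range_mul_eq [AddCommMonoid M] {f : ℕ → M} {k a : ℕ}
    (hf : Function.Periodic f k) (ha : a.Coprime k) :
    ∑ j ∈ range k, f (a * j) = ∑ j ∈ range k, f j := by
  rcases k.eq_zero_or_pos with rfl | hk
  · simp
  have hmaps : Set.MapsTo (fun j => a * j % k) (range k) (range k) :=
    fun j _ => mem_range.2 (Nat.mod_lt _ hk)
  have hinj : Set.InjOn (fun j => a * j % k) (range k) := fun i hi j hj hij =>
    Nat.ModEq.eq_of_lt_of_lt (Nat.ModEq.cancel_left_of_coprime (Nat.coprime_comm.mp ha) hij)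
      (mem_range.1 hi) (mem_range.1 hj)
  calc ∑ j ∈ range k, f (a * j) = ∑ j ∈ range k, f (a * j % k) := by simp only [hf.map_mod_nat]
    _ = ∑ j ∈ range k, f j := sum_nbij _ hmaps hinj
          (surjOn_of_injOn_of_card_le _ hmaps hinj le_rfl) fun _ _ => rfl

end RangeSums

lemma mul_eq_zero_of_eq_mul_of_eq_mul {K : Type*} [Field K] [NeZero (2 : K)] {a b c d : K}
    (ha : a = c * a) (hb : b = d * b) (hcd : c * d = -1) : a * b = 0 := by
  by_cases hc : c = 1
  · rw [hc, one_mul] at hcd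
    have hb2 : (2 : K) * b = 0 := by linear_combination hb + b * hcd
    simp [(mul_eq_zero.mp hb2).resolve_left two_ne_zero]
  · have ha1 : (1 - c) * a = 0 := by linear_combination ha
    simp [(mul_eq_zero.mp ha1).resolve_left (sub_ne_zero.mpr (Ne.symm hc))]

section CharacterSums

variable {k : ℕ} (χ : DirichletCharacter ℂ k)

lemma DirichletCharacter.map_zero_of_ne_one (hχ : χ ≠ 1) : χ 0 = 0 := by
  have : Nontrivial (ZMod k) := ZMod.nontrivial_iff.mpr fun h => hχ (by subst h; exact χ.level_one)
  exact MulChar.map_zero χ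

lemma conjChar_apply (a : ZMod k) : conjChar χ a = starRingEnd ℂ (χ a) := rfl

lemma conjChar_conjChar_apply (a : ZMod k) : conjChar (conjChar χ) a = χ a := by
  simp [conjChar_apply]

lemma conjChar_mul_self {a : ZMod k} (ha : IsUnit a) : conjChar χ a * χ a = 1 := by
  rw [conjChar_apply, mul_comm, Complex.mul_conj, Complex.normSq_eq_norm_sq,
    ← ha.unit_spec, DirichletCharacter.unit_norm_eq_one]
  norm_num

lemma conjChar_neg_one : conjChar χ (-1) = χ (-1) := by
  rcases χ.even_or_odd with h | h <;> rw [conjChar_apply, h] <;> simp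

noncomputable def charBernSum (n : ℕ) (x : ℝ) : ℂ :=
  ∑ j ∈ range k, χ j * (pB n ((j : ℝ) / k + x) : ℂ)

noncomputable def charEulerSum (n : ℕ) : ℂ :=
  ∑ j ∈ range k, χ j * (pE n ((j : ℝ) / k) : ℂ)

noncomputable def altCharEulerSum (n : ℕ) : ℂ :=
  ∑ j ∈ range k, (-1) ^ j * χ j * (pE n ((j : ℝ) / k) : ℂ)

lemma genB_conjChar (n : ℕ) (x : ℝ) :
    genB (conjChar χ) n x = (k : ℂ) ^ ((n : ℤ) - 1) * charBernSum χ n (x / k) := by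
  simp only [genB, charBernSum, conjChar_conjChar_apply, add_div]

lemma charBernSum_add_int (n : ℕ) (x : ℝ) (z : ℤ) :
    charBernSum χ n (x + z) = charBernSum χ n x := by
  simp only [charBernSum, ← add_assoc, pB_add_int]

lemma charBernSum_neg (n : ℕ) (x : ℝ) :
    charBernSum χ n (-x) = χ (-1) * (-1) ^ n * charBernSum χ n x := by
  rcases k.eq_zero_or_pos with rfl | hk
  · simp [charBernSum]
  have hkR : (k : ℝ) ≠ 0 := by positivity
  unfold charBernSum
  rw [← sum_range_sub_eq_of_apply_eq (fun j => χ j * (pB n ((j : ℝ) / k + -x) : ℂ)), mul_sum]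
  · refine sum_congr rfl fun j hj => ?_
    have hjk : j ≤ k := (mem_range.1 hj).le
    have hχ : χ ((k - j : ℕ) : ZMod k) = χ (-1) * χ j := by
      rw [Nat.cast_sub hjk, ZMod.natCast_self, zero_sub, ← neg_one_mul, map_mul]
    have hpB : pB n (((k - j : ℕ) : ℝ) / k + -x) = (-1) ^ n * pB n (j / k + x) := by
      rw [Nat.cast_sub hjk, show ((k : ℝ) - j) / k + -x = -((j : ℝ) / k + x) + ((1 : ℤ) : ℝ) by
        push_cast; field_simp; ring, pB_add_int, pB_neg]
    simp only [hχ, hpB]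
    push_cast
    ring
  · simp only [ZMod.natCast_self, Nat.cast_zero, zero_div, div_self hkR]
    rw [show (1 : ℝ) + -x = 0 + -x + ((1 : ℤ) : ℝ) by push_cast; ring, pB_add_int]

lemma charBernSum_zero_add_half_eq_mul_self (n : ℕ) :
    charBernSum χ n 0 + charBernSum χ n (1 / 2) =
      χ (-1) * (-1) ^ n * (charBernSum χ n 0 + charBernSum χ n (1 / 2)) := by
  have h0 := charBernSum_neg χ n 0
  have hh := charBernSum_neg χ n (1 / 2)
  rw [neg_zero] at h0
  rw [← charBernSum_add_int χ _ _ 1, show -(1 / 2 : ℝ) + (1 : ℤ) = 1 / 2 by norm_num] at hh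
  linear_combination h0 + hh

lemma charBernSum_neg_natCast_div_two (n n' : ℕ) :
    charBernSum χ n (-(n' / 2)) = (charBernSum χ n 0 + charBernSum χ n (1 / 2)) / 2 +
      (-1) ^ n' * ((charBernSum χ n 0 - charBernSum χ n (1 / 2)) / 2) := by
  obtain ⟨t, rfl | rfl⟩ := Nat.even_or_odd' n'
  · rw [show -(((2 * t : ℕ) : ℝ) / 2) = 0 + ((-t : ℤ) : ℝ) by push_cast; ring,
      charBernSum_add_int, pow_mul]
    norm_num
    ring
  · rw [show -(((2 * t + 1 : ℕ) : ℝ) / 2) = 1 / 2 + ((-(t + 1) : ℤ) : ℝ) by push_cast; ring,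
      charBernSum_add_int, pow_succ, pow_mul]
    norm_num
    ring

lemma charEulerSum_eq_mul_self (hχ0 : χ 0 = 0) (n : ℕ) :
    charEulerSum χ n = χ (-1) * (-1) ^ n * charEulerSum χ n := by
  unfold charEulerSum
  nth_rw 1 [← sum_range_sub_eq_of_apply_eq (fun j => χ j * (pE n ((j : ℝ) / k) : ℂ))
    (by simp [hχ0])]
  rw [mul_sum]
  refine sum_congr rfl fun j hj => ?_
  rcases Nat.eq_zero_or_pos j with rfl | hj0
  · simp [hχ0]
  have hjk := mem_range.1 hj
  have hkR : (0 : ℝ) < k := by exact_mod_cast hj0.trans hjk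
  have hx : (j : ℝ) / k ∈ Set.Ioo 0 1 :=
    ⟨by positivity, (div_lt_one hkR).2 (by exact_mod_cast hjk)⟩
  rw [Nat.cast_sub hjk.le, Nat.cast_sub hjk.le, ZMod.natCast_self, zero_sub, ← neg_one_mul,
    map_mul, sub_div, div_self hkR.ne', pE_one_sub hx]
  push_cast
  ring

lemma genE_zero (n : ℕ) : genE χ n 0 = (k : ℂ) ^ n * altCharEulerSum (conjChar χ) n := by
  simp only [genE, altCharEulerSum, add_zero]

lemma genE_conjChar_natCast_self (hk : k ≠ 0) (n : ℕ) :
    genE (conjChar χ) n k = -((k : ℂ) ^ n * altCharEulerSum χ n) := by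
  have hkR : (k : ℝ) ≠ 0 := by exact_mod_cast hk
  rw [genE, altCharEulerSum, mul_sum, mul_sum, ← sum_neg_distrib]
  refine sum_congr rfl fun j _ => ?_
  rw [conjChar_conjChar_apply, add_div, div_self hkR,
    show (j : ℝ) / k + 1 = j / k + ((1 : ℕ) : ℝ) by simp, pE_add_nat]
  push_cast
  ring

lemma sum_char_mul_pE_two_mul (hk : Odd k) (n : ℕ) :
    ∑ j ∈ range k, χ j * (pE n (2 * ((j : ℝ) / k)) : ℂ) = conjChar χ 2 * altCharEulerSum χ n := by
  have hk0 : (k : ℝ) ≠ 0 := by exact_mod_cast hk.pos.ne'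
  have h2 : IsUnit (2 : ZMod k) := by
    simpa using (ZMod.isUnit_iff_coprime 2 k).mpr (Nat.coprime_two_left.mpr hk)
  have hper : Function.Periodic (fun j : ℕ => (-1) ^ j * χ j * (pE n ((j : ℝ) / k) : ℂ)) k := by
    intro j
    simp only [Nat.cast_add, ZMod.natCast_self, add_zero, add_div, div_self hk0,
      show (1 : ℝ) = ((1 : ℕ) : ℝ) by simp, pE_add_nat, pow_add, hk.neg_one_pow]
    push_cast
    ring
  rw [altCharEulerSum, ← hper.sum_range_mul_eq (Nat.coprime_two_left.mpr hk), mul_sum]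
  refine sum_congr rfl fun j _ => ?_
  rw [pow_mul, neg_one_sq, one_pow, one_mul, Nat.cast_mul, Nat.cast_two, map_mul]
  simp only [← mul_assoc, conjChar_mul_self χ h2, one_mul]
  push_cast
  ring_nf

lemma charBernSum_half_sub_zero (hk : Odd k) (hχ0 : χ 0 = 0) (n : ℕ) :
    charBernSum χ (n + 1) (1 / 2) - charBernSum χ (n + 1) 0 =
      (n + 1) / 2 ^ (n + 1) * (conjChar χ 2 * altCharEulerSum χ n) := by
  rw [← sum_char_mul_pE_two_mul χ hk, mul_sum, charBernSum, charBernSum, ← sum_sub_distrib]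
  refine sum_congr rfl fun j hj => ?_
  rcases Nat.eq_zero_or_pos j with rfl | hj0
  · simp [hχ0]
  have hjk := mem_range.1 hj
  have hkR : (0 : ℝ) < k := by exact_mod_cast hj0.trans hjk
  have hx : (j : ℝ) / k ∈ Set.Ioo 0 1 :=
    ⟨by positivity, (div_lt_one hkR).2 (by exact_mod_cast hjk)⟩
  have hx2 : (j : ℝ) / k ≠ 1 / 2 := by
    intro h
    rw [div_eq_div_iff hkR.ne' two_ne_zero] at h
    norm_cast at h
    obtain ⟨r, rfl⟩ := hk
    omega
  rw [← mul_sub, add_zero, ← Complex.ofReal_sub, pB_add_half_sub n hx hx2]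
  push_cast
  ring

end CharacterSums

lemma sum_Icc_conjChar_mul_genB_mul_pE {k : ℕ} (χ : DirichletCharacter ℂ k) (hk : k ≠ 0)
    (hχ0 : χ 0 = 0) (n l : ℕ) :
    ∑ j ∈ Icc 1 k, conjChar χ j * genB (conjChar χ) (n + 1) (-((k : ℝ) * j) / 2) *
        (pE l ((j : ℝ) / k) : ℂ) =
      (k : ℂ) ^ n * ((charBernSum χ (n + 1) 0 + charBernSum χ (n + 1) (1 / 2)) / 2 *
          charEulerSum (conjChar χ) l +
        (charBernSum χ (n + 1) 0 - charBernSum χ (n + 1) (1 / 2)) / 2 *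
          altCharEulerSum (conjChar χ) l) := by
  have hkR : (k : ℝ) ≠ 0 := by exact_mod_cast hk
  rw [sum_Icc_one_eq_sum_range_of_apply_eq _ (by simp [conjChar_apply, hχ0]), charEulerSum,
    altCharEulerSum, mul_sum, mul_sum, ← sum_add_distrib, mul_sum]
  refine sum_congr rfl fun j _ => ?_
  rw [genB_conjChar, Nat.cast_succ, add_sub_cancel_right, zpow_natCast,
    show -((k : ℝ) * j) / 2 / k = -((j : ℝ) / 2) by field_simp, charBernSum_neg_natCast_div_two]
  ring

theorem stmt19_general (k : ℕ) (hk : Odd k) (χ : DirichletCharacter ℂ k) (hχ : χ ≠ 1)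
    (p m : ℕ) (hp : Odd p) (hm1 : 1 ≤ m) (hmp : m ≤ p) :
    ∑ n ∈ Finset.Icc 1 k, conjChar χ n * genB (conjChar χ) (p + 1 - m) (-((k : ℝ) * n) / 2) *
        ((pE (m - 1) ((n : ℝ) / k) : ℝ) : ℂ) =
      (k : ℂ) ^ ((1 : ℤ) - m) * (2 : ℂ) ^ ((m : ℤ) - p - 2) * conjChar χ 2 *
        ((p + 1 - m : ℕ) : ℂ) * genE (conjChar χ) (p - m) (k : ℝ) * genE χ (m - 1) 0 := by
  have hχ0 : χ 0 = 0 := χ.map_zero_of_ne_one hχ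
  obtain ⟨q, rfl⟩ : ∃ q, p = q + m := ⟨p - m, by omega⟩
  obtain ⟨l, rfl⟩ : ∃ l, m = l + 1 := ⟨m - 1, by omega⟩
  rw [show q + (l + 1) + 1 - (l + 1) = q + 1 by omega, show q + (l + 1) - (l + 1) = q by omega,
    Nat.add_sub_cancel, sum_Icc_conjChar_mul_genB_mul_pE χ hk.pos.ne' hχ0,
    genE_conjChar_natCast_self χ hk.pos.ne', genE_zero]
  set A0 := charBernSum χ (q + 1) 0
  set Ah := charBernSum χ (q + 1) (1 / 2)
  have hvanish : (A0 + Ah) * charEulerSum (conjChar χ) l = 0 := by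
    refine mul_eq_zero_of_eq_mul_of_eq_mul (charBernSum_zero_add_half_eq_mul_self χ (q + 1))
      (charEulerSum_eq_mul_self _ (by simp [conjChar_apply, hχ0]) l) ?_
    rw [conjChar_neg_one, mul_mul_mul_comm, ← map_mul, neg_one_mul, neg_neg, map_one, one_mul,
      ← pow_add, show q + 1 + l = q + (l + 1) by ring, hp.neg_one_pow]
  have hdiff : (Ah - A0) * 2 ^ (q + 1) = (q + 1) * (conjChar χ 2 * altCharEulerSum χ q) := by
    rw [charBernSum_half_sub_zero χ hk hχ0 q]
    field_simp
  have hkC : (k : ℂ) ≠ 0 := by exact_mod_cast hk.pos.ne'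
  simp only [zpow_sub₀ hkC, zpow_sub₀ (two_ne_zero' ℂ), zpow_natCast, zpow_ofNat]
  field_simp
  push_cast
  linear_combination 2 * (k : ℂ) ^ (l + 1) * 2 ^ (q + (l + 1)) * hvanish -
    2 * (k : ℂ) ^ (l + 1) * 2 ^ l * altCharEulerSum (conjChar χ) l * hdiff

theorem stmt19 (k : ℕ) (hk : Odd k) (χ : DirichletCharacter ℂ k) (hχ : χ ≠ 1)
    (hprim : χ.IsPrimitive) (p m : ℕ) (hp : Odd p) (hm1 : 1 ≤ m) (hmp : m ≤ p) :
    ∑ n ∈ Finset.Icc 1 k, conjChar χ n * genB (conjChar χ) (p + 1 - m) (-((k : ℝ) * n) / 2) *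
        ((pE (m - 1) ((n : ℝ) / k) : ℝ) : ℂ) =
      (k : ℂ) ^ ((1 : ℤ) - m) * (2 : ℂ) ^ ((m : ℤ) - p - 2) * conjChar χ 2 *
        ((p + 1 - m : ℕ) : ℂ) * genE (conjChar χ) (p - m) (k : ℝ) * genE χ (m - 1) 0 :=
  stmt19_general k hk χ hχ p m hp hm1 hmp
end
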